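/- Let K(m) = ∫_0^{π/2} (1 − m sin²θ)^{−1/2} dθ for m < 1 denote the complete elliptic integral of the first kind. Then lim_{ε → 0⁺} [ (ε⁴ + ε⁸)^{−1/4} · K( 1/2 + 1/(2√(1 + ε⁴)) ) ] / ( (2/ε) · log(1/ε) ) = 1. -/

import Mathlib

/-!
After `θ ↦ π/2 - θ`, `K(m) = ∫₀^{π/2} (δ + m sin²u)^{-1/2} du` with `δ = 1 - m`, and
`∫₀^b (δ + u²)^{-1/2} du = arsinh (b / √δ)`. Comparing `sin u` with `u` from above, and from
below through `u ≤ (1 + u²) sin u`, traps `K(m)` between `arsinh (π / (2√δ))` and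
`(arsinh (π / (2√δ)) + π²/8) / √m`. Along the curve `m → 1` and `δ ∼ ε⁴/4`, so
`arsinh (π / (2√δ)) = 2 log (1/ε) + O(1)`, while the prefactor is `ε⁻¹ (1 + ε⁴)^{-1/4}`.
-/

open MeasureTheory Filter Real Topology

lemma continuous_inv_sqrt_add_sq {δ : ℝ} (hδ : 0 < δ) :
    Continuous fun u : ℝ => (√(δ + u ^ 2))⁻¹ :=
  Continuous.inv₀ (by fun_prop) fun u => (sqrt_pos.2 (by positivity)).ne'

lemma integral_inv_sqrt_add_sq {δ : ℝ} (hδ : 0 < δ) (b : ℝ) :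
    ∫ u in (0 : ℝ)..b, (√(δ + u ^ 2))⁻¹ = arsinh (b / √δ) := by
  have hderiv (u : ℝ) : HasDerivAt (fun v => arsinh (v / √δ)) (√(δ + u ^ 2))⁻¹ u := by
    refine ((hasDerivAt_id u).div_const √δ).arsinh.congr_deriv ?_
    have : √(δ + u ^ 2) = √δ * √(1 + (u / √δ) ^ 2) := by
      rw [← sqrt_mul hδ.le, div_pow, sq_sqrt hδ.le]
      field_simp
    rw [this, mul_inv]
    simp [mul_comm]
  rw [intervalIntegral.integral_eq_sub_of_hasDerivAt (fun u _ => hderiv u)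
    ((continuous_inv_sqrt_add_sq hδ).intervalIntegrable 0 b)]
  simp

lemma tendsto_arsinh_sub_log_atTop :
    Tendsto (fun x => arsinh x - log x) atTop (𝓝 (log 2)) := by
  -- for `x > 0`, `arsinh x - log x = log (1 + √(x⁻¹ ^ 2 + 1))`
  have hg : Tendsto (fun y : ℝ => log (1 + √(y ^ 2 + 1))) (𝓝 0) (𝓝 (log 2)) := by
    have : ContinuousAt (fun y : ℝ => log (1 + √(y ^ 2 + 1))) 0 :=
      ContinuousAt.log (by fun_prop) (by positivity)
    convert this.tendsto using 2
    norm_num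
  refine (hg.comp tendsto_inv_atTop_zero).congr' ?_
  filter_upwards [eventually_gt_atTop 0] with x hx
  simp only [Function.comp_apply, arsinh]
  rw [← log_div (by positivity) hx.ne', add_div, div_self hx.ne', inv_pow,
    ← sqrt_sq hx.le, ← sqrt_div (by positivity), sqrt_sq hx.le]
  field_simp

lemma le_sin_mul_one_add_sq {u : ℝ} (hu0 : 0 ≤ u) (hu2 : u ≤ 2) :
    u ≤ sin u * (1 + u ^ 2) := by
  nlinarith [sin_ge_sub_cube hu0, mul_nonneg (pow_nonneg hu0 3) (by nlinarith : 0 ≤ 5 - u ^ 2)]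

lemma inv_sqrt_add_sin_sq_le {δ u : ℝ} (hδ : 0 < δ) (hu0 : 0 ≤ u) (hu2 : u ≤ 2) :
    (√(δ + sin u ^ 2))⁻¹ ≤ (√(δ + u ^ 2))⁻¹ + u := by
  set a := √(δ + u ^ 2)
  have ha : 0 < a := sqrt_pos.2 (by positivity)
  have hb : 0 < √(δ + sin u ^ 2) := sqrt_pos.2 (by positivity)
  have hua : u ≤ a := le_sqrt_of_sq_le (by linarith)
  have hab : a ≤ (1 + u ^ 2) * √(δ + sin u ^ 2) := by
    refine sqrt_le_iff.2 ⟨by positivity, ?_⟩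
    rw [mul_pow, sq_sqrt (by positivity)]
    nlinarith [le_sin_mul_one_add_sq hu0 hu2, pow_nonneg hu0 4, sq_nonneg u]
  calc (√(δ + sin u ^ 2))⁻¹ ≤ (1 + u ^ 2) / a := by
        rw [inv_eq_one_div, div_le_div_iff₀ hb ha]; linarith
    _ = a⁻¹ + u * (u / a) := by field_simp
    _ ≤ a⁻¹ + u := by
        gcongr
        exact mul_le_of_le_one_right hu0 ((div_le_one ha).2 hua)

noncomputable def ellipticK (m : ℝ) : ℝ :=
  ∫ θ in (0 : ℝ)..(π / 2), (1 - m * sin θ ^ 2) ^ (-(1 : ℝ) / 2)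

lemma ellipticK_eq_integral {m : ℝ} (hm : m ≤ 1) :
    ellipticK m = ∫ u in (0 : ℝ)..(π / 2), (√(1 - m + m * sin u ^ 2))⁻¹ := by
  have hreflect := intervalIntegral.integral_comp_sub_left
    (fun θ => (1 - m * sin θ ^ 2) ^ (-(1 : ℝ) / 2)) (a := 0) (b := π / 2) (π / 2)
  rw [sub_self, sub_zero] at hreflect
  rw [ellipticK, ← hreflect]
  refine intervalIntegral.integral_congr fun u _ => ?_
  have hcos : 1 - m * sin (π / 2 - u) ^ 2 = 1 - m + m * sin u ^ 2 := by
    rw [sin_pi_div_two_sub, cos_sq']; ring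
  have hnonneg : 0 ≤ 1 - m + m * sin u ^ 2 := by
    nlinarith [mul_nonneg (sub_nonneg.2 hm) (sub_nonneg.2 (sin_sq_le_one u)), sq_nonneg (sin u)]
  simp only [hcos, sqrt_eq_rpow, ← rpow_neg hnonneg, neg_div]

lemma one_sub_add_mul_sin_sq_pos {m : ℝ} (hm : m < 1) (u : ℝ) : 0 < 1 - m + m * sin u ^ 2 := by
  nlinarith [mul_nonneg (sub_nonneg.2 hm.le) (sub_nonneg.2 (sin_sq_le_one u)), sq_nonneg (sin u),
    mul_nonneg (sq_nonneg (sin u)) (sub_nonneg.2 (sin_sq_le_one u))]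

lemma continuous_inv_sqrt_one_sub_add_mul_sin_sq {m : ℝ} (hm : m < 1) :
    Continuous fun u => (√(1 - m + m * sin u ^ 2))⁻¹ :=
  Continuous.inv₀ (by fun_prop) fun u => (sqrt_pos.2 (one_sub_add_mul_sin_sq_pos hm u)).ne'

lemma arsinh_le_ellipticK {m : ℝ} (hm : m < 1) :
    arsinh (π / 2 / √(1 - m)) ≤ ellipticK m := by
  have hδ : 0 < 1 - m := by linarith
  rw [ellipticK_eq_integral hm.le, ← integral_inv_sqrt_add_sq hδ]
  refine intervalIntegral.integral_mono_on pi_div_two_pos.le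
    ((continuous_inv_sqrt_add_sq hδ).intervalIntegrable _ _)
    ((continuous_inv_sqrt_one_sub_add_mul_sin_sq hm).intervalIntegrable _ _) fun u _ => ?_
  refine inv_anti₀ (sqrt_pos.2 (one_sub_add_mul_sin_sq_pos hm u)) (sqrt_le_sqrt ?_)
  rcases le_or_gt m 0 with hm0 | hm0
  · nlinarith [sq_nonneg (sin u), sq_nonneg u]
  · nlinarith [sin_sq_le_sq (x := u), sq_nonneg (sin u)]

lemma ellipticK_le {m : ℝ} (hm0 : 0 < m) (hm1 : m < 1) :
    ellipticK m ≤ (√m)⁻¹ * (arsinh (π / 2 / √(1 - m)) + π ^ 2 / 8) := by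
  have hδ : 0 < 1 - m := by linarith
  have hbound : ∫ u in (0 : ℝ)..(π / 2), (√m)⁻¹ * ((√(1 - m + u ^ 2))⁻¹ + u) =
      (√m)⁻¹ * (arsinh (π / 2 / √(1 - m)) + π ^ 2 / 8) := by
    rw [intervalIntegral.integral_const_mul, intervalIntegral.integral_add
      ((continuous_inv_sqrt_add_sq hδ).intervalIntegrable _ _)
      intervalIntegral.intervalIntegrable_id,
      integral_inv_sqrt_add_sq hδ, integral_id]
    ring
  rw [ellipticK_eq_integral hm1.le, ← hbound]
  refine intervalIntegral.integral_mono_on pi_div_two_pos.le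
    ((continuous_inv_sqrt_one_sub_add_mul_sin_sq hm1).intervalIntegrable _ _)
    ((((continuous_inv_sqrt_add_sq hδ).add continuous_id).const_mul _).intervalIntegrable _ _)
    fun u hu => ?_
  have hsqrt_m : 0 < √m := sqrt_pos.2 hm0
  have hfactor : √m * √(1 - m + sin u ^ 2) ≤ √(1 - m + m * sin u ^ 2) := by
    rw [← sqrt_mul hm0.le]
    exact sqrt_le_sqrt (by nlinarith)
  calc (√(1 - m + m * sin u ^ 2))⁻¹ ≤ (√m * √(1 - m + sin u ^ 2))⁻¹ :=
        inv_anti₀ (mul_pos hsqrt_m (sqrt_pos.2 (by positivity))) hfactor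
    _ = (√m)⁻¹ * (√(1 - m + sin u ^ 2))⁻¹ := mul_inv _ _
    _ ≤ (√m)⁻¹ * ((√(1 - m + u ^ 2))⁻¹ + u) := by
        gcongr
        exact inv_sqrt_add_sin_sq_le hδ hu.1 (by linarith [hu.2, pi_le_four])

lemma tendsto_div_of_tendsto_sub {α : Type*} {l : Filter α} {f g : α → ℝ} {c : ℝ}
    (hg : Tendsto g l atTop) (hfg : Tendsto (fun x => f x - g x) l (𝓝 c)) :
    Tendsto (fun x => f x / g x) l (𝓝 1) := by
  have := (hfg.div_atTop hg).const_add 1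
  rw [add_zero] at this
  refine this.congr' ?_
  filter_upwards [hg.eventually_gt_atTop 0] with x hx
  field_simp
  ring

lemma tendsto_two_mul_log_one_div :
    Tendsto (fun ε : ℝ => 2 * log (1 / ε)) (𝓝[>] 0) atTop := by
  simpa only [one_div, log_inv, Function.comp_def] using
    (tendsto_neg_atBot_atTop.comp tendsto_log_nhdsGT_zero).const_mul_atTop two_pos

lemma tendsto_one_add_pow_four_rpow (p : ℝ) :
    Tendsto (fun ε : ℝ => (1 + ε ^ 4) ^ p) (𝓝 0) (𝓝 1) := by
  have h : Continuous fun ε : ℝ => (1 + ε ^ 4) ^ p :=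
    (by fun_prop : Continuous fun ε : ℝ => 1 + ε ^ 4).rpow_const
      fun ε => Or.inl (by positivity)
  simpa using h.tendsto 0

lemma tendsto_arsinh_div_sqrt_sub_two_log {δ : ℝ → ℝ} {b d : ℝ} (hb : 0 < b) (hd : 0 < d)
    (hδ : Tendsto (fun ε => δ ε / ε ^ 4) (𝓝[>] 0) (𝓝 d)) :
    Tendsto (fun ε => arsinh (b / √(δ ε)) - 2 * log (1 / ε)) (𝓝[>] 0)
      (𝓝 (log 2 + (log b - log d / 2))) := by
  have hpos : ∀ᶠ ε in 𝓝[>] 0, 0 < ε ∧ 0 < δ ε := by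
    filter_upwards [self_mem_nhdsWithin, hδ.eventually (lt_mem_nhds hd)] with ε hε hq
    exact ⟨hε, by simpa [hε] using (div_pos_iff_of_pos_right (pow_pos hε 4)).1 hq⟩
  have hδ0 : Tendsto δ (𝓝[>] 0) (𝓝 0) := by
    have hpow : Tendsto (fun ε : ℝ => ε ^ 4) (𝓝[>] 0) (𝓝 0) :=
      ((continuous_pow 4).tendsto' 0 0 (by norm_num)).mono_left nhdsWithin_le_nhds
    have := hδ.mul hpow
    rw [mul_zero] at this
    refine this.congr' ?_
    filter_upwards [hpos] with ε hε
    exact div_mul_cancel₀ _ (pow_pos hε.1 4).ne'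
  have hsqrt : Tendsto (fun ε => √(δ ε)) (𝓝[>] 0) (𝓝[>] 0) := by
    refine tendsto_nhdsWithin_iff.2 ⟨?_, ?_⟩
    · simpa [Function.comp_def] using (continuous_sqrt.tendsto 0).comp hδ0
    · filter_upwards [hpos] with ε hε
      exact sqrt_pos.2 hε.2
  have hx : Tendsto (fun ε => b / √(δ ε)) (𝓝[>] 0) atTop := by
    simpa only [div_eq_mul_inv, Function.comp_def] using
      (tendsto_inv_nhdsGT_zero.comp hsqrt).const_mul_atTop hb
  refine ((tendsto_arsinh_sub_log_atTop.comp hx).add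
    (tendsto_const_nhds.sub ((hδ.log hd.ne').div_const 2))).congr' ?_
  filter_upwards [hpos] with ε ⟨hε, hδε⟩
  simp only [Function.comp_apply]
  rw [log_div hb.ne' (sqrt_pos.2 hδε).ne', log_sqrt hδε.le, log_div hδε.ne' (by positivity),
    log_pow, one_div, log_inv]
  push_cast
  ring

lemma rpow_add_pow_eight_mul_div {ε : ℝ} (hε : 0 < ε) (k : ℝ) :
    (ε ^ 4 + ε ^ 8) ^ (-(1 : ℝ) / 4) * k / (2 / ε * log (1 / ε)) =
      (1 + ε ^ 4) ^ (-(1 : ℝ) / 4) * (k / (2 * log (1 / ε))) := by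
  have hpow : (ε ^ 4 + ε ^ 8) ^ (-(1 : ℝ) / 4) = ε⁻¹ * (1 + ε ^ 4) ^ (-(1 : ℝ) / 4) := by
    rw [show ε ^ 4 + ε ^ 8 = ε ^ 4 * (1 + ε ^ 4) by ring,
      mul_rpow (by positivity) (by positivity), ← rpow_natCast, ← rpow_mul hε.le]
    norm_num [rpow_neg_one]
  rw [hpow]
  field_simp

noncomputable def grushinModulus (ε : ℝ) : ℝ := 1 / 2 + 1 / (2 * √(1 + ε ^ 4))

lemma one_sub_grushinModulus (ε : ℝ) :
    1 - grushinModulus ε = ε ^ 4 / (2 * √(1 + ε ^ 4) * (√(1 + ε ^ 4) + 1)) := by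
  have hs2 : √(1 + ε ^ 4) ^ 2 = 1 + ε ^ 4 := sq_sqrt (by positivity)
  rw [grushinModulus, eq_div_iff (by positivity)]
  field_simp
  nlinarith [hs2]

lemma grushinModulus_mem_Ioo {ε : ℝ} (hε : ε ≠ 0) : grushinModulus ε ∈ Set.Ioo 0 1 := by
  have h := one_sub_grushinModulus ε
  have : 0 < ε ^ 4 / (2 * √(1 + ε ^ 4) * (√(1 + ε ^ 4) + 1)) := by positivity
  exact ⟨by unfold grushinModulus; positivity, by linarith⟩

lemma continuous_grushinModulus : Continuous grushinModulus := by
  unfold grushinModulus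
  fun_prop (disch := intro; positivity)

lemma tendsto_one_sub_grushinModulus_div :
    Tendsto (fun ε => (1 - grushinModulus ε) / ε ^ 4) (𝓝[≠] 0) (𝓝 (1 / 4)) := by
  have hcont : Continuous fun ε : ℝ => 1 / (2 * √(1 + ε ^ 4) * (√(1 + ε ^ 4) + 1)) := by
    fun_prop (disch := intro; positivity)
  have hlim : Tendsto (fun ε : ℝ => 1 / (2 * √(1 + ε ^ 4) * (√(1 + ε ^ 4) + 1)))
      (𝓝[≠] 0) (𝓝 (1 / 4)) := by
    convert (hcont.tendsto 0).mono_left nhdsWithin_le_nhds using 2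
    norm_num
  refine hlim.congr' ?_
  filter_upwards [self_mem_nhdsWithin] with ε hε
  rw [one_sub_grushinModulus]
  field_simp [show ε ≠ 0 from hε]

lemma tendsto_inv_sqrt_grushinModulus :
    Tendsto (fun ε => (√(grushinModulus ε))⁻¹) (𝓝 0) (𝓝 1) := by
  have h0 : grushinModulus 0 = 1 := by norm_num [grushinModulus]
  have h := ((continuous_sqrt.comp continuous_grushinModulus).tendsto 0).inv₀ (by simp [h0])
  rwa [Function.comp_apply, h0, sqrt_one, inv_one] at h

/-- The product (power times logarithm) behavior of the Grushin fundamental solution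
along the curve `x(ε) = (ε, 2ε⁴)`, `y(ε) = (ε, ε⁴)`:
`(ε⁴+ε⁸)^{−1/4} K(1/2 + 1/(2√(1+ε⁴))) ∼ (2/ε) log(1/ε)` as `ε → 0⁺`,
where `K` is the complete elliptic integral of the first kind. -/
theorem stmt19 :
    Tendsto (fun ε : ℝ =>
        ((ε ^ 4 + ε ^ 8) ^ (-(1 : ℝ) / 4) *
            ∫ θ in (0 : ℝ)..(Real.pi / 2),
              (1 - (1 / 2 + 1 / (2 * Real.sqrt (1 + ε ^ 4))) * Real.sin θ ^ 2)
                ^ (-(1 : ℝ) / 2)) /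
          ((2 / ε) * Real.log (1 / ε)))
      (nhdsWithin 0 (Set.Ioi 0)) (nhds 1) := by
  change Tendsto (fun ε : ℝ =>
    ((ε ^ 4 + ε ^ 8) ^ (-(1 : ℝ) / 4) * ellipticK (grushinModulus ε)) / ((2 / ε) * log (1 / ε)))
    (𝓝[>] 0) (𝓝 1)
  set A := fun ε => arsinh (π / 2 / √(1 - grushinModulus ε))
  have hA : Tendsto (fun ε => A ε - 2 * log (1 / ε)) (𝓝[>] 0) _ :=
    tendsto_arsinh_div_sqrt_sub_two_log pi_div_two_pos (by norm_num)
      (tendsto_one_sub_grushinModulus_div.mono_left (nhdsWithin_mono _ fun _ h => h.ne'))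
  have hc := (tendsto_one_add_pow_four_rpow (-(1 : ℝ) / 4)).mono_left
    (nhdsWithin_le_nhds (s := Set.Ioi 0))
  have hlower := hc.mul (tendsto_div_of_tendsto_sub tendsto_two_mul_log_one_div hA)
  have hupper := hc.mul ((tendsto_inv_sqrt_grushinModulus.mono_left nhdsWithin_le_nhds).mul
    (tendsto_div_of_tendsto_sub (f := fun ε => A ε + π ^ 2 / 8) tendsto_two_mul_log_one_div
      ((hA.add_const (π ^ 2 / 8)).congr fun ε => by ring)))
  simp only [mul_one] at hlower hupper
  refine tendsto_of_tendsto_of_tendsto_of_le_of_le' hlower hupper ?_ ?_ <;>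
    filter_upwards [Ioo_mem_nhdsGT one_pos] with ε ⟨hε0, hε1⟩ <;>
    obtain ⟨hm0, hm1⟩ := grushinModulus_mem_Ioo hε0.ne' <;>
    have := log_pos (one_lt_one_div hε0 hε1) <;>
    rw [rpow_add_pow_eight_mul_div hε0]
  · gcongr
    exact arsinh_le_ellipticK hm1
  · rw [← mul_div_assoc (√(grushinModulus ε))⁻¹]
    gcongr
    exact ellipticK_le hm0 hm1
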